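/- The causal relation of the sub-Lorentzian Heisenberg group is closed: if pₙ ≤ qₙ for all n, pₙ → p and qₙ → q, then p ≤ q. -/
import Mathlib


open Filter

/-- Heisenberg group law. -/
noncomputable def hmul (a b : ℝ × ℝ × ℝ) : ℝ × ℝ × ℝ :=
  (a.1 + b.1, a.2.1 + b.2.1, a.2.2 + b.2.2 + (a.1 * b.2.1 - b.1 * a.2.1) / 2)

/-- Heisenberg group inverse. -/
noncomputable def hinv (a : ℝ × ℝ × ℝ) : ℝ × ℝ × ℝ := (-a.1, -a.2.1, -a.2.2)

/-- The causal future of the identity. -/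
def JplusZero : Set (ℝ × ℝ × ℝ) :=
  {p | -p.1 ^ 2 + p.2.1 ^ 2 + 4 * |p.2.2| ≤ 0 ∧ 0 ≤ p.1}

/-- The causal relation: p ≤ q iff p⁻¹·q ∈ J⁺(0). -/
def causalLe (p q : ℝ × ℝ × ℝ) : Prop := hmul (hinv p) q ∈ JplusZero

lemma isClosed_JplusZero : IsClosed JplusZero := by
  have h1 : IsClosed {p : ℝ × ℝ × ℝ | -p.1 ^ 2 + p.2.1 ^ 2 + 4 * |p.2.2| ≤ 0} := by
    apply isClosed_le _ continuous_const
    fun_prop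
  have h2 : IsClosed {p : ℝ × ℝ × ℝ | 0 ≤ p.1} :=
    isClosed_le continuous_const continuous_fst
  exact h1.inter h2

lemma continuous_hmulinv : Continuous (fun pq : (ℝ × ℝ × ℝ) × (ℝ × ℝ × ℝ) => hmul (hinv pq.1) pq.2) := by
  unfold hmul hinv
  fun_prop

theorem causalLe_closed (pn qn : ℕ → ℝ × ℝ × ℝ) (p q : ℝ × ℝ × ℝ)
    (h : ∀ n, causalLe (pn n) (qn n))
    (hp : Tendsto pn atTop (nhds p)) (hq : Tendsto qn atTop (nhds q)) :
    causalLe p q := by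
  have ht : Tendsto (fun n => hmul (hinv (pn n)) (qn n)) atTop (nhds (hmul (hinv p) q)) :=
    (continuous_hmulinv.tendsto (p, q)).comp (hp.prodMk_nhds hq)
  exact isClosed_JplusZero.mem_of_tendsto ht (Filter.Eventually.of_forall h)
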